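/- arXiv:2203.02724 — 2 statements merged into one kernel-verified Lean document; each statement's English description precedes it below -/
import Mathlib

section
/- Let I be a normalized scheduling instance. If in some optimal schedule some processor is assigned no task, then I is not minimal. Furthermore, if T'_I(p) = ∅ for some processor p, then I is not minimal or ρ_I = 1. -/
open Finset

/-- A scheduling instance on uniform processors: `m` processors with positive
speeds `s 1, …, s m`, and `n` tasks with positive sizes `t 1 ≥ … ≥ t n`
(tasks are given in non-increasing order of size, as assumed for LPT). -/
structure SchedInstance where
  m : ℕ
  n : ℕ
  s : ℕ → ℝ
  t : ℕ → ℝ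
  hm : 1 ≤ m
  hn : 1 ≤ n
  hs : ∀ p, 1 ≤ p → p ≤ m → 0 < s p
  ht : ∀ i, 1 ≤ i → i ≤ n → 0 < t i
  tsorted : ∀ i j, 1 ≤ i → i ≤ j → j ≤ n → t j ≤ t i

namespace SchedInstance

variable (I : SchedInstance)

/-- The set of processor indices `{1, …, m}`. -/
def procs : Finset ℕ := Finset.Icc 1 I.m

/-- The set of task indices `{1, …, n}`. -/
def tasks : Finset ℕ := Finset.Icc 1 I.n

lemma procs_nonempty : I.procs.Nonempty := Finset.nonempty_Icc.mpr I.hm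

/-- A schedule assigns every task `i ∈ {1,…,n}` a processor `A i ∈ {1,…,m}`. -/
def IsSchedule (A : ℕ → ℕ) : Prop := ∀ i ∈ I.tasks, A i ∈ I.procs

/-- Total size of the tasks assigned by `A` to processor `p`. -/
noncomputable def load (A : ℕ → ℕ) (p : ℕ) : ℝ :=
  ∑ i ∈ I.tasks.filter (fun i => A i = p), I.t i

/-- The makespan of a schedule `A` : the largest completion time
`(Σ_{A i = p} t i) / s p` over the processors `p`. -/
noncomputable def makespan (A : ℕ → ℕ) : ℝ :=
  I.procs.sup' I.procs_nonempty (fun p => I.load A p / I.s p)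

/-- `OPT(I)`: the optimal (minimum) makespan over all schedules. -/
noncomputable def opt : ℝ := sInf {r | ∃ A, I.IsSchedule A ∧ I.makespan A = r}

/-- The completion time of processor `p` if task `i` is added to it while the
current workloads are `w`. -/
noncomputable def cost (w : ℕ → ℝ) (i p : ℕ) : ℝ := (w p + I.t i) / I.s p

/-- The processor the LPT rule chooses for task `i` given current workloads `w` :
the smallest-index processor minimizing `(w p + t i) / s p`. -/
noncomputable def choose (w : ℕ → ℝ) (i : ℕ) : ℕ :=
  (I.procs.filter
    (fun p => I.cost w i p = I.procs.inf' I.procs_nonempty (I.cost w i))).min'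
    (by
      obtain ⟨p, hp, hpe⟩ := Finset.exists_mem_eq_inf' I.procs_nonempty (I.cost w i)
      exact ⟨p, Finset.mem_filter.mpr ⟨hp, hpe.symm⟩⟩)

/-- `lptW k p` : the workload of processor `p` after the LPT algorithm has
assigned tasks `1, …, k` (in this order). -/
noncomputable def lptW : ℕ → ℕ → ℝ
  | 0, _ => 0
  | (k + 1), p =>
      lptW k p + if I.choose (lptW k) (k + 1) = p ∧ k + 1 ≤ I.n then I.t (k + 1) else 0

/-- `A_I` : the LPT assignment; task `i` goes to the least-index processor
minimizing the resulting completion time, given the previous assignments. -/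
noncomputable def lptA (i : ℕ) : ℕ := I.choose (I.lptW (i - 1)) i

/-- `LPT(I)` : the makespan of the LPT schedule. -/
noncomputable def lptTime : ℝ := I.makespan I.lptA

/-- `ρ_I = LPT(I) / OPT(I)` : the approximation ratio of LPT on instance `I`. -/
noncomputable def ratio : ℝ := I.lptTime / I.opt

/-- `I` is normalized: `OPT(I) = 1`, speeds are non-increasing, and the
smallest task has size `t n = 1`. -/
def Normalized : Prop :=
  I.opt = 1 ∧ (∀ p q, 1 ≤ p → p ≤ q → q ≤ I.m → I.s q ≤ I.s p) ∧ I.t I.n = 1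

/-- `I` is minimal: every strictly smaller instance has a strictly smaller
LPT approximation ratio. -/
def Minimal : Prop :=
  ∀ J : SchedInstance, J.m ≤ I.m → J.n ≤ I.n →
    ¬(J.m = I.m ∧ J.n = I.n) → J.ratio < I.ratio

/-- `T_I(p)` : the tasks assigned to processor `p` by the LPT schedule. -/
noncomputable def T (p : ℕ) : Finset ℕ := I.tasks.filter (fun i => I.lptA i = p)

/-- `T'_I(p) = T_I(p) \ {n}` : the LPT tasks of `p`, without the last task. -/
noncomputable def T' (p : ℕ) : Finset ℕ := (I.T p).erase I.n

/-- `w'_I(p)` : the workload of `p` in the LPT schedule without the last task. -/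
noncomputable def w' (p : ℕ) : ℝ := ∑ i ∈ I.T' p, I.t i

/-- `T*(p)` for a schedule `A` : the tasks assigned to processor `p` by `A`. -/
noncomputable def Tstar (A : ℕ → ℕ) (p : ℕ) : Finset ℕ :=
  I.tasks.filter (fun i => A i = p)

/-- `w*(p)` for a schedule `A` : the workload of processor `p` under `A`. -/
noncomputable def wstar (A : ℕ → ℕ) (p : ℕ) : ℝ := ∑ i ∈ I.Tstar A p, I.t i

/-- `A` is an optimal schedule whose workloads satisfy `w*(1) ≥ … ≥ w*(m)`. -/
def IsSortedOptimal (A : ℕ → ℕ) : Prop :=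
  I.IsSchedule A ∧ I.makespan A = I.opt ∧
    ∀ p q, 1 ≤ p → p ≤ q → q ≤ I.m → I.wstar A q ≤ I.wstar A p

/-- Processor `p` dominates processor `q` (with respect to the optimal
schedule `A`): `s p ≤ s q` and there is `f : T*(q) → T'(p)` with
`t i ≥ Σ_{f j = i} t j` for every `i ∈ T'(p)`. -/
def Dominates (A : ℕ → ℕ) (p q : ℕ) : Prop :=
  I.s p ≤ I.s q ∧ ∃ f : ℕ → ℕ,
    (∀ j ∈ I.Tstar A q, f j ∈ I.T' p) ∧
    ∀ i ∈ I.T' p, (∑ j ∈ (I.Tstar A q).filter (fun j => f j = i), I.t j) ≤ I.t i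

end SchedInstance

/-- The polynomial `P_m(x) = 2x^m − x^{m−1} − ⋯ − x − 2`. -/
noncomputable def Pm (m : ℕ) (x : ℝ) : ℝ := 2 * x ^ m - (∑ k ∈ Finset.Ico 1 m, x ^ k) - 2

/-!
Let `q` be a processor on which the LPT makespan is attained. If `q` does not receive the last
task `n`, deleting task `n` keeps the LPT makespan and can only lower OPT. Otherwise delete the
slowest processor `m` together with the tasks that LPT puts on it before task `n`. On the other
processors LPT makes the same choices as before, and its best option for task `n` is no better
than in `I`, so the LPT makespan does not drop; and if `p` is idle in an optimal schedule, giving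
`p` the tasks that this schedule puts on `m` shows that OPT does not grow.

If `T'(p) = ∅` and `q` receives task `n`, then `LPT(I) ≤ t(n) / s(p)`: either this is at most OPT,
or `p` is idle in every optimal schedule and the first part applies.
-/

namespace Finset

variable (s : Finset ℕ) {i j : ℕ}

lemma nth_mem_of_lt_card (hj : j < #s) : Nat.nth (· ∈ s) j ∈ s :=
  Nat.nth_mem_of_lt_card (p := (· ∈ s)) s.finite_toSet (by rwa [finite_toSet_toFinset])

lemma nth_le_nth_of_lt_card (hij : i ≤ j) (hj : j < #s) :
    Nat.nth (· ∈ s) i ≤ Nat.nth (· ∈ s) j :=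
  Nat.nth_le_nth_of_lt_card (p := (· ∈ s)) s.finite_toSet hij (by rwa [finite_toSet_toFinset])

lemma nth_injOn : (Set.Iio #s).InjOn (Nat.nth (· ∈ s)) := by
  simpa only [finite_toSet_toFinset] using Nat.nth_injOn (p := (· ∈ s)) s.finite_toSet

lemma count_add_one_eq_card {a : ℕ} (ha : a ∈ s) (hmax : ∀ x ∈ s, x ≤ a) :
    Nat.count (· ∈ s) a + 1 = #s := by
  rw [← Nat.count_succ_eq_succ_count_iff.mpr ha, Nat.count_eq_card_filter_range]
  congr 1
  ext x
  simpa using fun hx => Nat.lt_succ_of_le (hmax x hx)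

end Finset

namespace SchedInstance

variable (I : SchedInstance)

lemma mem_procs {p : ℕ} : p ∈ I.procs ↔ 1 ≤ p ∧ p ≤ I.m := Finset.mem_Icc

lemma mem_tasks {i : ℕ} : i ∈ I.tasks ↔ 1 ≤ i ∧ i ≤ I.n := Finset.mem_Icc

lemma s_pos {p : ℕ} (hp : p ∈ I.procs) : 0 < I.s p :=
  I.hs p (I.mem_procs.mp hp).1 (I.mem_procs.mp hp).2

lemma t_pos {i : ℕ} (hi : i ∈ I.tasks) : 0 < I.t i :=
  I.ht i (I.mem_tasks.mp hi).1 (I.mem_tasks.mp hi).2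

lemma load_nonneg (A : ℕ → ℕ) (p : ℕ) : 0 ≤ I.load A p :=
  Finset.sum_nonneg fun _ hi => (I.t_pos (Finset.mem_filter.mp hi).1).le

lemma t_le_load {A : ℕ → ℕ} {i : ℕ} (hi : i ∈ I.tasks) : I.t i ≤ I.load A (A i) :=
  Finset.single_le_sum (f := I.t) (fun _ hj => (I.t_pos (Finset.mem_filter.mp hj).1).le)
    (Finset.mem_filter.mpr ⟨hi, rfl⟩)

lemma load_div_le_makespan (A : ℕ → ℕ) {p : ℕ} (hp : p ∈ I.procs) :
    I.load A p / I.s p ≤ I.makespan A :=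
  Finset.le_sup' (fun p => I.load A p / I.s p) hp

lemma makespan_congr {A B : ℕ → ℕ} (h : ∀ i ∈ I.tasks, A i = B i) :
    I.makespan A = I.makespan B := by
  unfold makespan load
  congr 1
  funext p
  congr 2
  exact Finset.filter_congr fun i hi => by rw [h i hi]

lemma makespan_nonneg (A : ℕ → ℕ) : 0 ≤ I.makespan A := by
  obtain ⟨p, hp⟩ := I.procs_nonempty
  exact (div_nonneg (I.load_nonneg A p) (I.s_pos hp).le).trans (I.load_div_le_makespan A hp)

lemma exists_makespan_eq_opt : ∃ A, I.IsSchedule A ∧ I.makespan A = I.opt := by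
  have hfin : {r | ∃ A, I.IsSchedule A ∧ I.makespan A = r}.Finite := by
    refine (Finset.finite_toSet ((I.tasks.pi fun _ => I.procs).image
      fun f => I.makespan fun i => if h : i ∈ I.tasks then f i h else 0)).subset ?_
    rintro _ ⟨A, hA, rfl⟩
    exact Finset.mem_image.mpr ⟨fun i _ => A i, Finset.mem_pi.mpr hA,
      I.makespan_congr fun i hi => by rw [dif_pos hi]⟩
  have hne : {r | ∃ A, I.IsSchedule A ∧ I.makespan A = r}.Nonempty :=
    ⟨_, fun _ => 1, fun _ _ => I.mem_procs.mpr ⟨le_rfl, I.hm⟩, rfl⟩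
  exact hne.csInf_mem hfin

lemma opt_le_makespan {A : ℕ → ℕ} (hA : I.IsSchedule A) : I.opt ≤ I.makespan A :=
  csInf_le ⟨0, fun _ ⟨B, _, hB⟩ => hB ▸ I.makespan_nonneg B⟩ ⟨A, hA, rfl⟩

lemma opt_pos : 0 < I.opt := by
  obtain ⟨A, hA, hAopt⟩ := I.exists_makespan_eq_opt
  have h1 : 1 ∈ I.tasks := I.mem_tasks.mpr ⟨le_rfl, I.hn⟩
  have hload : 0 < I.load A (A 1) := (I.t_pos h1).trans_le (I.t_le_load h1)
  exact hAopt ▸ (div_pos hload (I.s_pos (hA 1 h1))).trans_le (I.load_div_le_makespan A (hA 1 h1))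

lemma choose_mem_filter (w : ℕ → ℝ) (i : ℕ) :
    I.choose w i ∈ I.procs.filter
      (fun p => I.cost w i p = I.procs.inf' I.procs_nonempty (I.cost w i)) :=
  Finset.min'_mem _ _

lemma choose_mem_procs (w : ℕ → ℝ) (i : ℕ) : I.choose w i ∈ I.procs :=
  (Finset.mem_filter.mp (I.choose_mem_filter w i)).1

lemma cost_choose (w : ℕ → ℝ) (i : ℕ) :
    I.cost w i (I.choose w i) = I.procs.inf' I.procs_nonempty (I.cost w i) :=
  (Finset.mem_filter.mp (I.choose_mem_filter w i)).2

lemma cost_choose_le {w : ℕ → ℝ} {i p : ℕ} (hp : p ∈ I.procs) :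
    I.cost w i (I.choose w i) ≤ I.cost w i p :=
  I.cost_choose w i ▸ Finset.inf'_le _ hp

lemma choose_le {w : ℕ → ℝ} {i p : ℕ} (hp : p ∈ I.procs)
    (h : I.cost w i p = I.procs.inf' I.procs_nonempty (I.cost w i)) : I.choose w i ≤ p :=
  Finset.min'_le _ _ (Finset.mem_filter.mpr ⟨hp, h⟩)

lemma lptA_mem_procs (i : ℕ) : I.lptA i ∈ I.procs := I.choose_mem_procs _ _

lemma lptA_succ (k : ℕ) : I.lptA (k + 1) = I.choose (I.lptW k) (k + 1) := rfl

lemma lptW_succ (k p : ℕ) :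
    I.lptW (k + 1) p =
      I.lptW k p + if I.lptA (k + 1) = p ∧ k + 1 ≤ I.n then I.t (k + 1) else 0 := rfl

lemma lptW_succ_of_ne {k p : ℕ} (h : I.lptA (k + 1) ≠ p) : I.lptW (k + 1) p = I.lptW k p := by
  rw [lptW_succ, if_neg fun h' => h h'.1, add_zero]

lemma cost_lptA {i : ℕ} (hi : i ∈ I.tasks) :
    I.cost (I.lptW (i - 1)) i (I.lptA i) = I.lptW i (I.lptA i) / I.s (I.lptA i) := by
  obtain ⟨k, rfl⟩ : ∃ k, i = k + 1 := ⟨i - 1, by have := (I.mem_tasks.mp hi).1; omega⟩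
  rw [cost, lptW_succ, if_pos ⟨rfl, (I.mem_tasks.mp hi).2⟩, Nat.add_sub_cancel]

lemma lptW_eq_sum (k p : ℕ) :
    I.lptW k p = ∑ i ∈ (Finset.Icc 1 (min k I.n)).filter (fun i => I.lptA i = p), I.t i := by
  induction k with
  | zero => simp [lptW]
  | succ k ih =>
    rcases Nat.lt_or_ge k I.n with hk | hk
    · rw [lptW_succ, ih, min_eq_left hk.le, min_eq_left hk,
        ← Finset.insert_Icc_right_eq_Icc_add_one (by omega), Finset.filter_insert]
      by_cases hc : I.lptA (k + 1) = p
      · rw [if_pos ⟨hc, hk⟩, if_pos hc, Finset.sum_insert (by simp), add_comm]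
      · rw [if_neg fun h => hc h.1, if_neg hc, add_zero]
    · rw [lptW_succ, ih, min_eq_right hk, min_eq_right (by omega), if_neg (by omega), add_zero]

lemma load_lptA (p : ℕ) : I.load I.lptA p = I.lptW I.n p := by
  rw [lptW_eq_sum, min_self]
  rfl

lemma lptW_div_le_lptTime {q : ℕ} (hq : q ∈ I.procs) : I.lptW I.n q / I.s q ≤ I.lptTime :=
  I.load_lptA q ▸ I.load_div_le_makespan I.lptA hq

lemma exists_lptTime_eq : ∃ q ∈ I.procs, I.lptTime = I.lptW I.n q / I.s q := by
  obtain ⟨q, hq, h⟩ := Finset.exists_mem_eq_sup' I.procs_nonempty fun p => I.load I.lptA p / I.s p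
  exact ⟨q, hq, by rw [lptTime, makespan, h, load_lptA]⟩

lemma opt_le_lptTime : I.opt ≤ I.lptTime := I.opt_le_makespan fun i _ => I.lptA_mem_procs i

section Comparison

variable {I} {J : SchedInstance}

lemma ratio_le_ratio (hT : I.lptTime ≤ J.lptTime) (hO : J.opt ≤ I.opt) : I.ratio ≤ J.ratio :=
  div_le_div₀ (I.opt_pos.le.trans (I.opt_le_lptTime.trans hT)) hT J.opt_pos hO

lemma not_minimal_of_ratio_le (hm : J.m ≤ I.m) (hn : J.n ≤ I.n) (hne : ¬(J.m = I.m ∧ J.n = I.n))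
    (hr : I.ratio ≤ J.ratio) : ¬ I.Minimal :=
  fun hmin => (hmin J hm hn hne).not_ge hr

lemma procs_subset_procs (hm : J.m ≤ I.m) : J.procs ⊆ I.procs :=
  Finset.Icc_subset_Icc le_rfl hm

section SameSpeeds

variable {w w' : ℕ → ℝ} {i i' : ℕ}

lemma cost_eq_cost (hs : J.s = I.s) (ht : J.t i' = I.t i) (hw : ∀ q ∈ J.procs, w' q = w q)
    {q : ℕ} (hq : q ∈ J.procs) : J.cost w' i' q = I.cost w i q := by
  rw [cost, cost, ht, hw q hq, hs]

lemma inf'_cost_le_inf'_cost (hm : J.m ≤ I.m) (hs : J.s = I.s) (ht : J.t i' = I.t i)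
    (hw : ∀ q ∈ J.procs, w' q = w q) :
    I.procs.inf' I.procs_nonempty (I.cost w i) ≤ J.procs.inf' J.procs_nonempty (J.cost w' i') :=
  Finset.le_inf' _ _ fun _ hq =>
    cost_eq_cost hs ht hw hq ▸ Finset.inf'_le _ (procs_subset_procs hm hq)

lemma choose_eq_choose (hm : J.m ≤ I.m) (hs : J.s = I.s) (ht : J.t i' = I.t i)
    (hw : ∀ q ∈ J.procs, w' q = w q) (hc : I.choose w i ∈ J.procs) :
    J.choose w' i' = I.choose w i := by
  have hinf : J.procs.inf' J.procs_nonempty (J.cost w' i') =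
      I.procs.inf' I.procs_nonempty (I.cost w i) :=
    le_antisymm ((Finset.inf'_le _ hc).trans_eq (by rw [cost_eq_cost hs ht hw hc, cost_choose]))
      (inf'_cost_le_inf'_cost hm hs ht hw)
  refine le_antisymm (J.choose_le hc (by rw [hinf, cost_eq_cost hs ht hw hc, cost_choose])) ?_
  have hJ := J.choose_mem_procs w' i'
  exact I.choose_le (procs_subset_procs hm hJ) (by rw [← cost_eq_cost hs ht hw hJ, ← hinf,
    cost_choose])

end SameSpeeds

end Comparison

section FirstTasks

def firstTasks (k : ℕ) (hk1 : 1 ≤ k) (hkn : k ≤ I.n) : SchedInstance :=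
  ⟨I.m, k, I.s, I.t, I.hm, hk1, I.hs, fun i h1 h2 => I.ht i h1 (h2.trans hkn),
    fun i j h1 h2 h3 => I.tsorted i j h1 h2 (h3.trans hkn)⟩

variable {k : ℕ} (hk1 : 1 ≤ k) (hkn : k ≤ I.n)

lemma lptW_firstTasks {j : ℕ} (hj : j ≤ k) : (I.firstTasks k hk1 hkn).lptW j = I.lptW j := by
  induction j with
  | zero => rfl
  | succ j ih =>
    funext p
    have hJ : (I.firstTasks k hk1 hkn).lptA (j + 1) = I.lptA (j + 1) := by
      rw [lptA_succ, lptA_succ, ih (by omega)]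
      rfl
    rw [lptW_succ, lptW_succ, hJ, ih (by omega)]
    simp only [firstTasks, hj, hj.trans hkn, and_true]

lemma opt_firstTasks_le : (I.firstTasks k hk1 hkn).opt ≤ I.opt := by
  obtain ⟨A, hA, hAopt⟩ := I.exists_makespan_eq_opt
  have hsub : (I.firstTasks k hk1 hkn).tasks ⊆ I.tasks := Finset.Icc_subset_Icc le_rfl hkn
  refine ((I.firstTasks k hk1 hkn).opt_le_makespan fun i hi => hA i (hsub hi)).trans
    (hAopt ▸ Finset.sup'_le _ _ fun p hp => (div_le_div_of_nonneg_right ?_ (I.s_pos hp).le).trans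
      (I.load_div_le_makespan A hp))
  exact Finset.sum_le_sum_of_subset_of_nonneg (Finset.filter_subset_filter _ hsub)
    fun i hi _ => (I.t_pos (Finset.mem_filter.mp hi).1).le

/-- Witnessed by the instance without task `n`. -/
theorem not_minimal_of_lptA_last_ne {q : ℕ} (hq : q ∈ I.procs)
    (hbot : I.lptTime = I.lptW I.n q / I.s q) (hne : I.lptA I.n ≠ q) : ¬ I.Minimal := by
  have hn1 : I.n - 1 + 1 = I.n := Nat.sub_add_cancel I.hn
  have hlast : I.lptW I.n q = I.lptW (I.n - 1) q := by
    simpa only [hn1] using I.lptW_succ_of_ne (k := I.n - 1) (p := q) (by rwa [hn1])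
  have hk1 : 1 ≤ I.n - 1 := by
    refine Nat.one_le_iff_ne_zero.mpr fun h0 => ?_
    have hpos := I.opt_pos.trans_le (I.opt_le_lptTime.trans_eq hbot)
    rw [hlast, h0] at hpos
    simp [lptW] at hpos
  set J := I.firstTasks (I.n - 1) hk1 (Nat.sub_le _ _)
  refine not_minimal_of_ratio_le (J := J) le_rfl (Nat.sub_le _ _) (fun h => by
    have : J.n = I.n - 1 := rfl; omega) (ratio_le_ratio ?_ (I.opt_firstTasks_le _ _))
  calc I.lptTime = J.lptW J.n q / J.s q := by
        rw [hbot, hlast, show J.lptW J.n = I.lptW (I.n - 1) from I.lptW_firstTasks _ _ le_rfl]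
        rfl
    _ ≤ J.lptTime := J.lptW_div_le_lptTime hq

end FirstTasks

section RemoveSlowest

noncomputable def keptTasks : Finset ℕ := I.tasks \ I.T' I.m

lemma keptTasks_subset : I.keptTasks ⊆ I.tasks := Finset.sdiff_subset

lemma last_mem_keptTasks : I.n ∈ I.keptTasks :=
  Finset.mem_sdiff.mpr ⟨I.mem_tasks.mpr ⟨I.hn, le_rfl⟩, Finset.notMem_erase _ _⟩

lemma lptA_eq_of_notMem_keptTasks {i : ℕ} (hi : i ∈ I.tasks) (h : i ∉ I.keptTasks) :
    I.lptA i = I.m := by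
  have : i ∈ I.T' I.m := by simpa [keptTasks, hi] using h
  exact (Finset.mem_filter.mp (Finset.mem_of_mem_erase this)).2

lemma lptA_ne_of_mem_keptTasks {i : ℕ} (hi : i ∈ I.keptTasks) (hin : i ≠ I.n) :
    I.lptA i ≠ I.m := fun h =>
  (Finset.mem_sdiff.mp hi).2 (Finset.mem_erase.mpr ⟨hin, Finset.mem_filter.mpr
    ⟨I.keptTasks_subset hi, h⟩⟩)

lemma count_keptTasks_last : Nat.count (· ∈ I.keptTasks) I.n + 1 = #I.keptTasks :=
  I.keptTasks.count_add_one_eq_card I.last_mem_keptTasks fun _ hx =>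
    (I.mem_tasks.mp (I.keptTasks_subset hx)).2

noncomputable def keptTask (j : ℕ) : ℕ := Nat.nth (· ∈ I.keptTasks) j

lemma keptTask_mem_tasks {j : ℕ} (hj : j < #I.keptTasks) : I.keptTask j ∈ I.tasks :=
  I.keptTasks_subset (I.keptTasks.nth_mem_of_lt_card hj)

/-- Task `j ≥ 1` of the reduced instance is `keptTask (j - 1)`: `Nat.nth` counts from `0`. -/
noncomputable def removeSlowest (hm2 : 2 ≤ I.m) : SchedInstance where
  m := I.m - 1
  n := #I.keptTasks
  s := I.s
  t j := I.t (I.keptTask (j - 1))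
  hm := by omega
  hn := Finset.card_pos.mpr ⟨I.n, I.last_mem_keptTasks⟩
  hs p h1 h2 := I.hs p h1 (by omega)
  ht j h1 h2 := I.t_pos (I.keptTask_mem_tasks (by omega))
  tsorted i j h1 hij hj := I.tsorted _ _ (I.mem_tasks.mp (I.keptTask_mem_tasks (by omega))).1
    (I.keptTasks.nth_le_nth_of_lt_card (by omega) (by omega))
    (I.mem_tasks.mp (I.keptTask_mem_tasks (by omega))).2

variable (hm2 : 2 ≤ I.m)

lemma mem_procs_removeSlowest {q : ℕ} : q ∈ (I.removeSlowest hm2).procs ↔ 1 ≤ q ∧ q < I.m := by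
  rw [mem_procs]
  exact and_congr_right fun _ => show q ≤ I.m - 1 ↔ q < I.m by omega

lemma keptTask_pred_mem_tasks {j : ℕ} (hj : j ∈ (I.removeSlowest hm2).tasks) :
    I.keptTask (j - 1) ∈ I.tasks :=
  have hj' : 1 ≤ j ∧ j ≤ #I.keptTasks := (mem_tasks _).mp hj
  I.keptTask_mem_tasks (by omega)

lemma load_removeSlowest_le (f : ℕ → ℕ) (r : ℕ) :
    (I.removeSlowest hm2).load (fun j => f (I.keptTask (j - 1))) r ≤ I.load f r := by
  have hinj : Set.InjOn (fun j => I.keptTask (j - 1)) (I.removeSlowest hm2).tasks := by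
    intro a ha b hb hab
    have ha' : 1 ≤ a ∧ a ≤ #I.keptTasks := (mem_tasks _).mp ha
    have hb' : 1 ≤ b ∧ b ≤ #I.keptTasks := (mem_tasks _).mp hb
    have := I.keptTasks.nth_injOn (show a - 1 < #I.keptTasks by omega)
      (show b - 1 < #I.keptTasks by omega) hab
    omega
  change ∑ j ∈ _, I.t (I.keptTask (j - 1)) ≤ _
  rw [← Finset.sum_image (f := I.t) (hinj.mono (Finset.filter_subset _ _))]
  refine Finset.sum_le_sum_of_subset_of_nonneg (fun i hi => ?_)
    fun i hi _ => (I.t_pos (Finset.mem_filter.mp hi).1).le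
  obtain ⟨j, hj, rfl⟩ := Finset.mem_image.mp hi
  exact Finset.mem_filter.mpr
    ⟨I.keptTask_pred_mem_tasks hm2 (Finset.mem_filter.mp hj).1, (Finset.mem_filter.mp hj).2⟩

lemma opt_removeSlowest_le (hsort : ∀ p q, 1 ≤ p → p ≤ q → q ≤ I.m → I.s q ≤ I.s p)
    {A : ℕ → ℕ} (hA : I.IsSchedule A) {p : ℕ} (hp : p ∈ I.procs)
    (havoid : ∀ i ∈ I.tasks, A i ≠ p) : (I.removeSlowest hm2).opt ≤ I.makespan A := by
  set B := fun i => Equiv.swap p I.m (A i)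
  have hp' := I.mem_procs.mp hp
  have hB : (I.removeSlowest hm2).IsSchedule fun j => B (I.keptTask (j - 1)) := by
    intro j hj
    have hi := I.keptTask_pred_mem_tasks hm2 hj
    have hAi := I.mem_procs.mp (hA _ hi)
    have hAp := havoid _ hi
    rw [mem_procs_removeSlowest]
    simp only [B, Equiv.swap_apply_def]
    split_ifs <;> omega
  refine ((I.removeSlowest hm2).opt_le_makespan hB).trans (Finset.sup'_le _ _ fun r hr => ?_)
  have hr' := (I.mem_procs_removeSlowest hm2).mp hr
  have hrI : r ∈ I.procs := I.mem_procs.mpr ⟨hr'.1, hr'.2.le⟩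
  have hswap : Equiv.swap p I.m r ∈ I.procs ∧ I.s (Equiv.swap p I.m r) ≤ I.s r := by
    rw [Equiv.swap_apply_def, I.mem_procs]
    split_ifs with h1 h2
    · exact ⟨⟨by omega, le_rfl⟩, hsort r I.m hr'.1 hr'.2.le le_rfl⟩
    · omega
    · exact ⟨I.mem_procs.mp hrI, le_rfl⟩
  have hload : I.load B r = I.load A (Equiv.swap p I.m r) := by
    unfold load
    congr 1
    exact Finset.filter_congr fun i _ => Equiv.swap_apply_eq_iff
  calc (I.removeSlowest hm2).load _ r / I.s r ≤ I.load B r / I.s r :=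
        div_le_div_of_nonneg_right (I.load_removeSlowest_le hm2 B r) (I.s_pos hrI).le
    _ = I.load A (Equiv.swap p I.m r) / I.s r := by rw [hload]
    _ ≤ I.load A (Equiv.swap p I.m r) / I.s (Equiv.swap p I.m r) :=
        div_le_div_of_nonneg_left (I.load_nonneg A _) (I.s_pos hswap.1) hswap.2
    _ ≤ I.makespan A := I.load_div_le_makespan A hswap.1

lemma removeSlowest_t_count {i : ℕ} (hi : i ∈ I.keptTasks) :
    (I.removeSlowest hm2).t (Nat.count (· ∈ I.keptTasks) i + 1) = I.t i := by
  change I.t (Nat.nth _ (_ + 1 - 1)) = I.t i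
  rw [Nat.add_sub_cancel, Nat.nth_count hi]

lemma count_keptTasks_lt_card {i : ℕ} (hi : i < I.n) :
    Nat.count (· ∈ I.keptTasks) (i + 1) < #I.keptTasks :=
  (Nat.count_monotone _ hi).trans_lt (Nat.lt_of_succ_le I.count_keptTasks_last.le)

/-- `Nat.count (· ∈ I.keptTasks) (i + 1)` is the number of kept tasks among `1, …, i`. -/
lemma lptW_removeSlowest_count {i : ℕ} (hi : i < I.n) {q : ℕ}
    (hq : q ∈ (I.removeSlowest hm2).procs) :
    (I.removeSlowest hm2).lptW (Nat.count (· ∈ I.keptTasks) (i + 1)) q = I.lptW i q := by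
  induction i generalizing q with
  | zero =>
    have h0 : 0 ∉ I.keptTasks := fun h => by simpa using (I.mem_tasks.mp (I.keptTasks_subset h)).1
    rw [Nat.count_one, if_neg h0]
    rfl
  | succ i ih =>
    have hq' := (I.mem_procs_removeSlowest hm2).mp hq
    rw [Nat.count_succ]
    by_cases hk : i + 1 ∈ I.keptTasks
    · have hw : ∀ r ∈ (I.removeSlowest hm2).procs, (I.removeSlowest hm2).lptW
          (Nat.count (· ∈ I.keptTasks) (i + 1)) r = I.lptW i r := fun r hr => ih (by omega) hr
      have hlptA : (I.removeSlowest hm2).lptA (Nat.count (· ∈ I.keptTasks) (i + 1) + 1) =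
          I.lptA (i + 1) :=
        choose_eq_choose (Nat.sub_le _ _) rfl (I.removeSlowest_t_count hm2 hk) hw
          ((I.mem_procs_removeSlowest hm2).mpr ⟨(I.mem_procs.mp (I.lptA_mem_procs _)).1,
            lt_of_le_of_ne (I.mem_procs.mp (I.lptA_mem_procs _)).2
              (I.lptA_ne_of_mem_keptTasks hk (by omega))⟩)
      rw [if_pos hk, lptW_succ, lptW_succ, hlptA, hw q hq, I.removeSlowest_t_count hm2 hk]
      have hc : Nat.count (· ∈ I.keptTasks) (i + 1) + 1 ≤ #I.keptTasks :=
        I.count_keptTasks_lt_card (by omega)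
      simp only [removeSlowest, hc, hi.le, and_true]
    · have hA : I.lptA (i + 1) ≠ q := by
        rw [I.lptA_eq_of_notMem_keptTasks (I.mem_tasks.mpr ⟨by omega, hi.le⟩) hk]
        omega
      rw [if_neg hk, add_zero, ih (by omega) hq, I.lptW_succ_of_ne hA]

lemma lptTime_le_lptTime_removeSlowest
    (h : I.lptTime ≤ I.lptW I.n (I.lptA I.n) / I.s (I.lptA I.n)) :
    I.lptTime ≤ (I.removeSlowest hm2).lptTime := by
  set J := I.removeSlowest hm2
  set c := Nat.count (· ∈ I.keptTasks) I.n
  have hcard : c + 1 = J.n := I.count_keptTasks_last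
  have hn1 : I.n - 1 + 1 = I.n := Nat.sub_add_cancel I.hn
  have hw : ∀ r ∈ J.procs, J.lptW c r = I.lptW (I.n - 1) r := fun r hr => by
    simpa only [hn1] using I.lptW_removeSlowest_count hm2 (i := I.n - 1) (by omega) hr
  calc I.lptTime ≤ I.cost (I.lptW (I.n - 1)) I.n (I.lptA I.n) := by
        rwa [I.cost_lptA (I.mem_tasks.mpr ⟨I.hn, le_rfl⟩)]
    _ = I.procs.inf' I.procs_nonempty (I.cost (I.lptW (I.n - 1)) I.n) := I.cost_choose _ _
    _ ≤ J.procs.inf' J.procs_nonempty (J.cost (J.lptW c) (c + 1)) :=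
        inf'_cost_le_inf'_cost (Nat.sub_le _ _) rfl
          (I.removeSlowest_t_count hm2 I.last_mem_keptTasks) hw
    _ = J.cost (J.lptW (c + 1 - 1)) (c + 1) (J.lptA (c + 1)) := (J.cost_choose _ _).symm
    _ = J.lptW J.n (J.lptA J.n) / J.s (J.lptA J.n) := by
        rw [J.cost_lptA (J.mem_tasks.mpr ⟨le_add_self, hcard.le⟩), hcard]
    _ ≤ J.lptTime := J.lptW_div_le_lptTime (J.lptA_mem_procs _)

end RemoveSlowest

theorem not_minimal_of_optimal_of_Tstar_eq_empty
    (hsort : ∀ p q, 1 ≤ p → p ≤ q → q ≤ I.m → I.s q ≤ I.s p) {A : ℕ → ℕ}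
    (hA : I.IsSchedule A) (hAopt : I.makespan A = I.opt) {p : ℕ} (hp : p ∈ I.procs)
    (hT : I.Tstar A p = ∅) : ¬ I.Minimal := by
  have havoid : ∀ i ∈ I.tasks, A i ≠ p := fun i hi h =>
    Finset.notMem_empty i (hT ▸ Finset.mem_filter.mpr ⟨hi, h⟩)
  have h1 : 1 ∈ I.tasks := I.mem_tasks.mpr ⟨le_rfl, I.hn⟩
  have hm2 : 2 ≤ I.m := by
    have := I.mem_procs.mp (hA 1 h1); have := I.mem_procs.mp hp; have := havoid 1 h1; omega
  obtain ⟨q, hq, hbot⟩ := I.exists_lptTime_eq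
  by_cases hlast : I.lptA I.n = q
  · have hcard : #I.keptTasks ≤ I.n := by
      simpa [tasks] using Finset.card_le_card I.keptTasks_subset
    refine not_minimal_of_ratio_le (J := I.removeSlowest hm2) (Nat.sub_le _ _) hcard
      (fun h => by have : I.m - 1 = I.m := h.1; omega) (ratio_le_ratio ?_
        ((I.opt_removeSlowest_le hm2 hsort hA hp havoid).trans_eq hAopt))
    exact I.lptTime_le_lptTime_removeSlowest hm2 (hlast ▸ hbot.le)
  · exact I.not_minimal_of_lptA_last_ne hq hbot hlast

lemma lptW_pred_eq_zero_of_T'_eq_empty {p : ℕ} (hT' : I.T' p = ∅) : I.lptW (I.n - 1) p = 0 := by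
  rw [lptW_eq_sum]
  refine Finset.sum_eq_zero fun i hi => absurd (?_ : i ∈ I.T' p) (hT' ▸ Finset.notMem_empty i)
  obtain ⟨hi, hAi⟩ := Finset.mem_filter.mp hi
  have hi' := Finset.mem_Icc.mp hi
  have hn1 : min (I.n - 1) I.n = I.n - 1 := min_eq_left (Nat.sub_le _ _)
  exact Finset.mem_erase.mpr ⟨by omega, Finset.mem_filter.mpr
    ⟨I.mem_tasks.mpr ⟨hi'.1, by omega⟩, hAi⟩⟩

theorem not_minimal_or_ratio_eq_one_of_T'_eq_empty
    (hsort : ∀ p q, 1 ≤ p → p ≤ q → q ≤ I.m → I.s q ≤ I.s p) {p : ℕ} (hp : p ∈ I.procs)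
    (hT' : I.T' p = ∅) : ¬ I.Minimal ∨ I.ratio = 1 := by
  obtain ⟨q, hq, hbot⟩ := I.exists_lptTime_eq
  by_cases hlast : I.lptA I.n = q
  swap
  · exact Or.inl (I.not_minimal_of_lptA_last_ne hq hbot hlast)
  have hlpt : I.lptTime ≤ I.t I.n / I.s p :=
    calc I.lptTime = I.cost (I.lptW (I.n - 1)) I.n (I.lptA I.n) := by
          rw [I.cost_lptA (I.mem_tasks.mpr ⟨I.hn, le_rfl⟩), hlast, hbot]
      _ ≤ I.cost (I.lptW (I.n - 1)) I.n p := I.cost_choose_le hp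
      _ = I.t I.n / I.s p := by rw [cost, I.lptW_pred_eq_zero_of_T'_eq_empty hT', zero_add]
  by_cases hs : I.t I.n / I.s p ≤ I.opt
  · right
    rw [ratio, div_eq_one_iff_eq I.opt_pos.ne']
    exact le_antisymm (hlpt.trans hs) I.opt_le_lptTime
  · left
    obtain ⟨A, hA, hAopt⟩ := I.exists_makespan_eq_opt
    refine I.not_minimal_of_optimal_of_Tstar_eq_empty hsort hA hAopt hp
      (Finset.eq_empty_iff_forall_notMem.mpr fun i hi => hs ?_)
    obtain ⟨hi, hAi⟩ := Finset.mem_filter.mp hi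
    have hi' := I.mem_tasks.mp hi
    calc I.t I.n / I.s p ≤ I.t i / I.s p :=
          div_le_div_of_nonneg_right (I.tsorted i I.n hi'.1 hi'.2 le_rfl) (I.s_pos hp).le
      _ ≤ I.load A p / I.s p :=
          div_le_div_of_nonneg_right (hAi ▸ I.t_le_load hi) (I.s_pos hp).le
      _ ≤ I.makespan A := I.load_div_le_makespan A hp
      _ = I.opt := hAopt

end SchedInstance

/-- If in some optimal schedule some processor receives no task, then `I` is not
minimal; moreover, if `T'_I(p) = ∅` for some processor `p`, then `I` is not
minimal or `ρ_I = 1`. -/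
theorem not_minimal_of_empty_processor (I : SchedInstance) (hnorm : I.Normalized) :
    ((∃ A, I.IsSchedule A ∧ I.makespan A = I.opt ∧
        ∃ p, 1 ≤ p ∧ p ≤ I.m ∧ I.Tstar A p = ∅) → ¬ I.Minimal) ∧
    ((∃ p, 1 ≤ p ∧ p ≤ I.m ∧ I.T' p = ∅) → ¬ I.Minimal ∨ I.ratio = 1) :=
  ⟨fun ⟨_, hA, hAopt, _, hp1, hpm, hT⟩ => I.not_minimal_of_optimal_of_Tstar_eq_empty hnorm.2.1 hA
      hAopt (I.mem_procs.mpr ⟨hp1, hpm⟩) hT,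
    fun ⟨_, hp1, hpm, hT'⟩ => I.not_minimal_or_ratio_eq_one_of_T'_eq_empty hnorm.2.1
      (I.mem_procs.mpr ⟨hp1, hpm⟩) hT'⟩
end

section
/- Let m ≥ 1 and let S be a nonempty subset of {1, …, m}. If x > 0 satisfies Σ_{i∈S} P_i(x) ≤ 0, then x ≤ ρ_m. Moreover, if x > 0 satisfies Σ_{i∈S} P_i(x) + 3 − 2x ≤ 0, then x ≤ ρ_m or x ≥ 3/2. -/
open Finset

/-! For `x > 0`, `P_i(x) / x^i = 2 - Σ_{1 ≤ k < i} x^{-(i-k)} - 2x^{-i}` is strictly increasing, so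
a `P_i` that is nonnegative at some point is positive beyond it. As `P_m(2) = 2^m > 0`, the
positive root `ρ` of `P_m` lies below `2`; then `ρ P_i(ρ) = P_{i+1}(ρ) + 2 - ρ` gives `P_i(ρ) ≥ 0`
for all `i ≤ m`, going down from `P_m(ρ) = 0`. Hence every summand is positive once `x > ρ`. -/

lemma Pm_div_pow_eq (i : ℕ) {x : ℝ} (hx : x ≠ 0) :
    Pm i x / x ^ i = 2 - ∑ k ∈ Ico 1 i, (x ^ (i - k))⁻¹ - 2 * (x ^ i)⁻¹ := by
  have hterm : ∀ k ∈ Ico 1 i, x ^ k / x ^ i = (x ^ (i - k))⁻¹ := fun k hk => by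
    rw [pow_sub₀ x hx (mem_Ico.mp hk).2.le, mul_inv, inv_inv, div_eq_mul_inv, mul_comm]
  rw [← sum_congr rfl hterm, ← sum_div, Pm]
  field_simp

lemma strictMonoOn_Pm_div_pow {i : ℕ} (hi : 1 ≤ i) :
    StrictMonoOn (fun x => Pm i x / x ^ i) (Set.Ioi 0) := by
  intro a (ha : 0 < a) b (hb : 0 < b) hab
  simp only [Pm_div_pow_eq i ha.ne', Pm_div_pow_eq i hb.ne']
  have hsum : ∑ k ∈ Ico 1 i, (b ^ (i - k))⁻¹ ≤ ∑ k ∈ Ico 1 i, (a ^ (i - k))⁻¹ :=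
    sum_le_sum fun k _ => inv_anti₀ (pow_pos ha _) (pow_le_pow_left₀ ha.le hab.le _)
  have hlast : (b ^ i)⁻¹ < (a ^ i)⁻¹ :=
    inv_strictAnti₀ (pow_pos ha _) (pow_lt_pow_left₀ hab ha.le (by omega))
  linarith

lemma Pm_pos_of_nonneg_of_lt {i : ℕ} (hi : 1 ≤ i) {a b : ℝ} (ha : 0 < a) (hab : a < b)
    (hPa : 0 ≤ Pm i a) : 0 < Pm i b := by
  have hb : 0 < b := ha.trans hab
  have hquot : Pm i a / a ^ i < Pm i b / b ^ i := strictMonoOn_Pm_div_pow hi ha hb hab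
  exact (div_pos_iff_of_pos_right (pow_pos hb i)).mp
    ((div_nonneg hPa (pow_pos ha i).le).trans_lt hquot)

lemma Pm_succ {i : ℕ} (hi : 1 ≤ i) (x : ℝ) : Pm (i + 1) x = x * Pm i x + x - 2 := by
  simp only [Pm, sum_Ico_eq_sub _ hi, sum_Ico_eq_sub _ (hi.trans i.le_succ), geom_sum_succ]
  ring

lemma Pm_two {i : ℕ} (hi : 1 ≤ i) : Pm i 2 = 2 ^ i := by
  induction i, hi using Nat.le_induction with
  | base => norm_num [Pm]
  | succ n hn ih => rw [Pm_succ hn, ih]; ring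

lemma lt_two_of_Pm_eq_zero {m : ℕ} (hm : 1 ≤ m) {ρ : ℝ} (hρ : 0 < ρ) (hroot : Pm m ρ = 0) :
    ρ < 2 := by
  by_contra! h
  have hmono : Pm m 2 / 2 ^ m ≤ Pm m ρ / ρ ^ m :=
    (strictMonoOn_Pm_div_pow hm).monotoneOn (by norm_num) hρ h
  rw [Pm_two hm, hroot, div_self (by positivity), zero_div] at hmono
  linarith

lemma Pm_nonneg_of_le {x : ℝ} (hx : 0 < x) (hx2 : x ≤ 2) {i j : ℕ} (hi : 1 ≤ i) (hij : i ≤ j)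
    (hPj : 0 ≤ Pm j x) : 0 ≤ Pm i x := by
  induction hij using Nat.decreasingInduction with
  | self => exact hPj
  | of_succ k hk ih =>
    have hrec := Pm_succ (by omega : 1 ≤ k) x
    nlinarith [ih (by omega)]

lemma Pm_pos_of_root_lt {i m : ℕ} (hi : 1 ≤ i) (him : i ≤ m) {ρ x : ℝ} (hρ : 0 < ρ)
    (hroot : Pm m ρ = 0) (hlt : ρ < x) : 0 < Pm i x := by
  have hρ2 : ρ < 2 := lt_two_of_Pm_eq_zero (hi.trans him) hρ hroot
  exact Pm_pos_of_nonneg_of_lt hi hρ hlt (Pm_nonneg_of_le hρ hρ2.le hi him hroot.ge)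

theorem sum_Pm_nonpos_bounds_general (m : ℕ)
    (S : Finset ℕ) (hS : S.Nonempty) (hSsub : S ⊆ Finset.Icc 1 m)
    (ρ : ℝ) (hρpos : 0 < ρ) (hρroot : Pm m ρ = 0)
    (x : ℝ) :
    ((∑ i ∈ S, Pm i x) ≤ 0 → x ≤ ρ) ∧
    ((∑ i ∈ S, Pm i x) + 3 - 2 * x ≤ 0 → x ≤ ρ ∨ 3 / 2 ≤ x) := by
  have hpos : ρ < x → 0 < ∑ i ∈ S, Pm i x := fun hlt =>
    sum_pos (fun i hiS => by
      obtain ⟨hi, him⟩ := mem_Icc.mp (hSsub hiS)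
      exact Pm_pos_of_root_lt hi him hρpos hρroot hlt) hS
  constructor
  · intro hsum
    by_contra! hlt
    linarith [hpos hlt]
  · intro hsum
    by_contra! h
    linarith [hpos h.1]

/-- Let `m ≥ 1`, let `S` be a nonempty subset of `{1, …, m}`, and let `ρ_m`
be the unique positive root of `P_m`. If `x > 0` and `Σ_{i∈S} P_i(x) ≤ 0`,
then `x ≤ ρ_m`; moreover, if `Σ_{i∈S} P_i(x) + 3 − 2x ≤ 0`, then `x ≤ ρ_m`
or `x ≥ 3/2`. -/
theorem sum_Pm_nonpos_bounds (m : ℕ) (hm : 1 ≤ m)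
    (S : Finset ℕ) (hS : S.Nonempty) (hSsub : S ⊆ Finset.Icc 1 m)
    (ρ : ℝ) (hρpos : 0 < ρ) (hρroot : Pm m ρ = 0)
    (x : ℝ) (hx : 0 < x) :
    ((∑ i ∈ S, Pm i x) ≤ 0 → x ≤ ρ) ∧
    ((∑ i ∈ S, Pm i x) + 3 - 2 * x ≤ 0 → x ≤ ρ ∨ 3 / 2 ≤ x) :=
  sum_Pm_nonpos_bounds_general m S hS hSsub ρ hρpos hρroot x
end
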